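/- Let A be a pre-Lie ring of cardinality p^n for a prime p, and suppose A is right nilpotent (A^{(m)} = 0 for some m, where A^{(1)} = A and A^{(i+1)} = A^{(i)}·A). Then A^{(n+1)} = 0. -/
import Mathlib


class PreLieRing (A : Type*) extends AddCommGroup A where
  mul : A → A → A
  mul_add : ∀ a b c : A, mul a (b + c) = mul a b + mul a c
  add_mul : ∀ a b c : A, mul (a + b) c = mul a c + mul b c
  left_symm : ∀ x y z : A,
    mul (mul x y) z - mul x (mul y z) = mul (mul y x) z - mul y (mul x z)

namespace PreLieRing

variable {A : Type*} [PreLieRing A]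

/-- The additive subgroup generated by products `a · b` with `a ∈ S`, `b ∈ T`. -/
def subMulSet (S T : Set A) : AddSubgroup A :=
  AddSubgroup.closure {x | ∃ a ∈ S, ∃ b ∈ T, x = mul a b}

def subMul (S T : AddSubgroup A) : AddSubgroup A := subMulSet (S : Set A) (T : Set A)

/-- `leftPow A m` is `A^{m+1}` of the left chain `A^1 = A`, `A^{i+1} = A·A^i`. -/
def leftPow (A : Type*) [PreLieRing A] : ℕ → AddSubgroup A
  | 0 => ⊤
  | m + 1 => subMul ⊤ (leftPow A m)

/-- `leftIdx A m = A^m` (paper indexing, junk value `A` at `m = 0`). -/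
def leftIdx (A : Type*) [PreLieRing A] (m : ℕ) : AddSubgroup A := leftPow A (m - 1)

/-- `rightPow A m` is `A^{(m+1)}` of the right chain `A^{(1)} = A`, `A^{(i+1)} = A^{(i)}·A`. -/
def rightPow (A : Type*) [PreLieRing A] : ℕ → AddSubgroup A
  | 0 => ⊤
  | m + 1 => subMul (rightPow A m) ⊤

def rightIdx (A : Type*) [PreLieRing A] (m : ℕ) : AddSubgroup A := rightPow A (m - 1)

/-- `strongPow A m` is `A^{[m+1]}` of the chain `A^{[1]} = A`,
`A^{[i+1]} = Σ_{j=1}^{i} A^{[j]}·A^{[i+1-j]}`. -/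
def strongPow (A : Type*) [PreLieRing A] : ℕ → AddSubgroup A
  | 0 => ⊤
  | m + 1 => ⨆ j : Fin (m + 1), subMul (strongPow A j) (strongPow A (m - j))
  termination_by m => m
  decreasing_by
  · exact j.isLt
  · exact Nat.lt_succ_of_le (Nat.sub_le m j)

def strongIdx (A : Type*) [PreLieRing A] (m : ℕ) : AddSubgroup A := strongPow A (m - 1)

/-- An ideal of a pre-Lie ring: an additive subgroup absorbing multiplication
on both sides. -/
def IsIdeal (I : AddSubgroup A) : Prop :=
  (∀ a : A, ∀ i ∈ I, mul i a ∈ I) ∧ (∀ a : A, ∀ i ∈ I, mul a i ∈ I)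

end PreLieRing

namespace PreLieRing

variable {A : Type*} [PreLieRing A]

lemma subMul_mono_left {S T : AddSubgroup A} (h : S ≤ T) (U : AddSubgroup A) :
    subMul S U ≤ subMul T U := by
  apply AddSubgroup.closure_mono
  rintro x ⟨a, ha, b, hb, rfl⟩
  exact ⟨a, h ha, b, hb, rfl⟩

lemma rightPow_succ_le (k : ℕ) : rightPow A (k + 1) ≤ rightPow A k := by
  induction k with
  | zero => exact le_top
  | succ k ih => exact subMul_mono_left ih ⊤

lemma rightPow_anti : ∀ {i j : ℕ}, i ≤ j → rightPow A j ≤ rightPow A i := by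
  intro i j h
  exact antitone_nat_of_succ_le rightPow_succ_le h

lemma rightPow_stab {k : ℕ} (h : rightPow A (k + 1) = rightPow A k) :
    ∀ j, rightPow A (k + j) = rightPow A k := by
  intro j
  induction j with
  | zero => rfl
  | succ j ih =>
    show subMul (rightPow A (k + j)) ⊤ = _
    rw [ih]
    exact h

end PreLieRing

open PreLieRing in
/-- a right nilpotent pre-Lie ring of cardinality `p^n` satisfies
`A^{(n+1)} = 0`. -/
theorem right_nilpotent_bound (p n : ℕ) (hp : p.Prime) (A : Type*) [PreLieRing A]
    [Fintype A] (hcard : Nat.card A = p ^ n) (hnil : ∃ m : ℕ, rightIdx A m = ⊥) :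
    rightIdx A (n + 1) = ⊥ := by
  obtain ⟨m, hm⟩ := hnil
  have hbot : ∃ m', rightPow A m' = ⊥ := ⟨m - 1, hm⟩
  obtain ⟨m', hm'⟩ := hbot
  show rightPow A n = ⊥
  have key : ∀ k : ℕ, rightPow A k = ⊥ ∨
      ∃ a : ℕ, Nat.card (rightPow A k) = p ^ a ∧ a + k ≤ n := by
    intro k
    induction k with
    | zero =>
      right
      exact ⟨n, by rw [← hcard]; exact (Nat.card_congr (AddSubgroup.topEquiv.toEquiv)), by omega⟩
    | succ k ih =>
      rcases ih with hb | ⟨a, hca, han⟩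
      · left
        exact le_bot_iff.mp (hb ▸ rightPow_succ_le k)
      rcases eq_or_lt_of_le (rightPow_succ_le (A := A) k) with heq | hlt
      · left
        rcases le_or_gt m' k with hle | hlt'
        · have : rightPow A k ≤ rightPow A m' := rightPow_anti hle
          rw [hm'] at this
          rw [heq]
          exact le_bot_iff.mp this
        · have := rightPow_stab heq (m' - k)
          rw [Nat.add_sub_cancel' (le_of_lt hlt')] at this
          rw [heq, ← this, hm']
      · right
        have hdvd : Nat.card (rightPow A (k + 1)) ∣ p ^ n := by
          rw [← hcard, AddSubgroup.card_eq_card_quotient_mul_card_addSubgroup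
            (rightPow A (k + 1))]
          exact Dvd.intro_left _ rfl
        obtain ⟨b, -, hbeq⟩ := (Nat.dvd_prime_pow hp).mp hdvd
        refine ⟨b, hbeq, ?_⟩
        have hss : (rightPow A (k + 1) : Set A) ⊂ (rightPow A k : Set A) := by
          exact_mod_cast hlt
        have hcardlt : Nat.card (rightPow A (k + 1)) < Nat.card (rightPow A k) := by
          have h1 := Set.ncard_lt_ncard hss (Set.toFinite _)
          rwa [← Nat.card_coe_set_eq, ← Nat.card_coe_set_eq] at h1
        rw [hca, hbeq] at hcardlt
        have hb : b < a := by
          by_contra hba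
          exact absurd (Nat.pow_le_pow_right hp.one_lt.le (le_of_not_gt hba)) (not_le.mpr hcardlt)
        omega
  rcases key n with h | ⟨a, hca, han⟩
  · exact h
  · have : a = 0 := by omega
    subst this
    exact AddSubgroup.eq_bot_of_card_eq _ (by simpa using hca)
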